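/- arXiv:1311.0711 — 6 statements merged into one kernel-verified Lean document; each statement's English description precedes it below -/
import Mathlib

section
/- Acyclicity is preserved by arrow subdivision: let B : n → n → ℤ be skew-symmetric and acyclic, and let t, h ∈ n be distinct with B t h ≥ 1. Let B' be the skew-symmetric matrix on n ⊕ {v} defined by B' i j = B i j for i, j ∈ n with {i, j} ≠ {t, h}; B' t h = B t h − 1, B' h t = −(B t h − 1); B' t v = 1, B' v h = 1, B' v t = −1, B' h v = −1; and B' i v = B' v i = 0 for all other i ∈ n. Then B' is acyclic. -/
/-- A skew-symmetric integer matrix encoding a quiver without loops or 2-cycles. -/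
def SkewSymm {n : Type*} (B : n → n → ℤ) : Prop := ∀ i j, B i j = -B j i

/-- `v : Fin (m+1) → n` is an oriented path of length `m`:
`B (v r) (v (r+1)) > 0` for all `r`. -/
def IsPath {n : Type*} (B : n → n → ℤ) (m : ℕ) (v : Fin (m + 1) → n) : Prop :=
  ∀ r : Fin m, 0 < B (v r.castSucc) (v r.succ)

/-- `B` is acyclic: no oriented path of positive length from a vertex to itself. -/
def Acyclic {n : Type*} (B : n → n → ℤ) : Prop :=
  ¬ ∃ (m : ℕ) (v : Fin (m + 1) → n), 1 ≤ m ∧ IsPath B m v ∧ v 0 = v (Fin.last m)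

/-- `B` is bipartite: each vertex is a source or a sink. -/
def Bipartite {n : Type*} (B : n → n → ℤ) : Prop :=
  ∀ k, (∀ j, 0 ≤ B k j) ∨ (∀ j, B k j ≤ 0)

/-- The Fomin–Zelevinsky mutation of `B` at vertex `k`. -/
def mutate {n : Type*} [DecidableEq n] (B : n → n → ℤ) (k : n) : n → n → ℤ :=
  fun i j =>
    if i = k ∨ j = k then -B i j
    else B i j + max (B i k) 0 * max (B k j) 0 - max (-B i k) 0 * max (-B k j) 0

/-- A maximal oriented path: it cannot be extended at either end. -/
def IsMaxPath {n : Type*} (B : n → n → ℤ) (m : ℕ) (v : Fin (m + 1) → n) : Prop :=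
  IsPath B m v ∧ (¬ ∃ u, 0 < B u (v 0)) ∧ ¬ ∃ w, 0 < B (v (Fin.last m)) w

/-- The matrix `B̃` on `n ⊕ Unit` obtained from `B` by adding a new vertex `v`
with arrows `h(α) → v` and `v → t(α)` (here `t = t(α)`, `h = h(α)`). -/
def extendQ {n : Type*} [DecidableEq n] (B : n → n → ℤ) (t h : n) :
    (n ⊕ Unit) → (n ⊕ Unit) → ℤ
  | Sum.inl i, Sum.inl j => B i j
  | Sum.inl i, Sum.inr _ => if i = h then 1 else if i = t then -1 else 0
  | Sum.inr _, Sum.inl j => if j = t then 1 else if j = h then -1 else 0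
  | Sum.inr _, Sum.inr _ => 0

/-- The matrix on `n ⊕ Unit` obtained from `B` by subdividing one arrow from
`t` to `h` through the new vertex `v`. -/
def subdividedQ {n : Type*} [DecidableEq n] (B : n → n → ℤ) (t h : n) :
    (n ⊕ Unit) → (n ⊕ Unit) → ℤ
  | Sum.inl i, Sum.inl j =>
      if i = t ∧ j = h then B t h - 1
      else if i = h ∧ j = t then -(B t h - 1)
      else B i j
  | Sum.inl i, Sum.inr _ => if i = t then 1 else if i = h then -1 else 0
  | Sum.inr _, Sum.inl j => if j = h then 1 else if j = t then -1 else 0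
  | Sum.inr _, Sum.inr _ => 0

/-! Collapsing the new vertex `v` onto `h` sends every arrow of the subdivided quiver to an arrow
of `B`, except `v → h`, which collapses to the vertex `h`. Two consecutive arrows of a path cannot
both be `v → h`, so the image of an oriented cycle is again an oriented cycle of `B`. -/

open Relation

namespace Relation

variable {α β : Type*} {r : α → α → Prop} {s : β → β → Prop}

theorem TransGen.lift_or_eq (f : α → β) {a b : α} (hab : a ≠ b) (hf : f a = f b)
    (hr : ∀ x y, r x y → s (f x) (f y) ∨ (x = a ∧ y = b)) {x y : α} (hxy : TransGen r x y) :
    TransGen s (f x) (f y) ∨ (x = a ∧ y = b) := by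
  induction hxy with
  | single hxy => exact (hr _ _ hxy).imp .single id
  | tail _ hyz ih =>
    rcases hr _ _ hyz, ih with ⟨hs | ⟨rfl, rfl⟩, ih | ⟨rfl, rfl⟩⟩
    · exact .inl (ih.tail hs)
    · exact .inl (hf ▸ .single hs)
    · exact .inl (hf ▸ ih)
    · exact absurd rfl hab

theorem irreflexive_transGen_of_lift_or_eq (f : α → β) {a b : α} (hab : a ≠ b) (hf : f a = f b)
    (hr : ∀ x y, r x y → s (f x) (f y) ∨ (x = a ∧ y = b)) (hs : ∀ y, ¬ TransGen s y y) :
    ∀ x, ¬ TransGen r x x := fun _ hx =>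
  (hx.lift_or_eq f hab hf hr).elim (hs _) fun ⟨hxa, hxb⟩ => hab (hxa ▸ hxb)

end Relation

section Paths

variable {n : Type*} {B : n → n → ℤ}

theorem IsPath.reflTransGen {m : ℕ} {v : Fin (m + 1) → n} (hv : IsPath B m v) :
    ReflTransGen (fun i j => 0 < B i j) (v 0) (v (Fin.last m)) := by
  induction m with
  | zero => exact .refl
  | succ m ih =>
    exact (ih (v := fun i => v i.castSucc) fun r => hv r.castSucc).tail (hv (Fin.last m))

theorem IsPath.transGen {m : ℕ} {v : Fin (m + 1) → n} (hv : IsPath B m v) (hm : 1 ≤ m) :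
    TransGen (fun i j => 0 < B i j) (v 0) (v (Fin.last m)) := by
  obtain ⟨k, rfl⟩ : ∃ k, m = k + 1 := ⟨m - 1, by omega⟩
  exact .tail' (IsPath.reflTransGen (v := fun i => v i.castSucc) fun r => hv r.castSucc)
    (hv (Fin.last k))

theorem exists_isPath_of_transGen {a b : n} (hab : TransGen (fun i j => 0 < B i j) a b) :
    ∃ (m : ℕ) (v : Fin (m + 1) → n), 1 ≤ m ∧ IsPath B m v ∧ v 0 = a ∧ v (Fin.last m) = b := by
  induction hab with
  | @single b hab => exact ⟨1, ![a, b], le_rfl, fun r => by fin_cases r; exact hab, rfl, rfl⟩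
  | @tail b c _ hbc ih =>
    obtain ⟨m, v, hm, hv, hv0, hvm⟩ := ih
    refine ⟨m + 1, Fin.snoc v c, by omega, fun r => ?_, by simpa using hv0, by simp⟩
    induction r using Fin.lastCases with
    | last => simpa [hvm] using hbc
    | cast r => rw [Fin.succ_castSucc, Fin.snoc_castSucc, Fin.snoc_castSucc]; exact hv r

theorem acyclic_iff_irreflexive_transGen :
    Acyclic B ↔ ∀ a, ¬ TransGen (fun i j => 0 < B i j) a a := by
  refine ⟨fun hB a ha => hB ?_, fun hB ⟨m, v, hm, hv, hcyc⟩ => hB (v 0) ?_⟩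
  · obtain ⟨m, v, hm, hv, hv0, hvm⟩ := exists_isPath_of_transGen ha
    exact ⟨m, v, hm, hv, hv0.trans hvm.symm⟩
  · simpa [hcyc] using hv.transGen hm

end Paths

theorem subdividedQ_pos {n : Type*} [DecidableEq n] {B : n → n → ℤ} {t h : n} (hpos : 1 ≤ B t h)
    {x y : n ⊕ Unit} (hxy : 0 < subdividedQ B t h x y) :
    0 < B (Sum.elim id (fun _ => h) x) (Sum.elim id (fun _ => h) y) ∨
      (x = Sum.inr () ∧ y = Sum.inl h) := by
  rcases x with i | ⟨⟩ <;> rcases y with j | ⟨⟩ <;> simp only [subdividedQ] at hxy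
  · split_ifs at hxy with htj hht
    · obtain ⟨rfl, rfl⟩ := htj
      exact .inl (by simp only [Sum.elim_inl, id]; omega)
    · omega
    · exact .inl hxy
  · split_ifs at hxy with hit
    · exact .inl (by simp only [Sum.elim_inl, Sum.elim_inr, id, hit]; omega)
    all_goals omega
  · split_ifs at hxy with hjh
    · exact .inr ⟨rfl, congrArg Sum.inl hjh⟩
    all_goals omega
  · omega

theorem stmt_2_general {n : Type*} [DecidableEq n] (B : n → n → ℤ) (t h : n)
    (hacyc : Acyclic B) (hpos : 1 ≤ B t h) :
    Acyclic (subdividedQ B t h) := by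
  rw [acyclic_iff_irreflexive_transGen] at hacyc ⊢
  exact irreflexive_transGen_of_lift_or_eq (Sum.elim id fun _ => h) Sum.inr_ne_inl rfl
    (fun _ _ => subdividedQ_pos hpos) hacyc

/-- Acyclicity is preserved by arrow subdivision. -/
theorem stmt_2 {n : Type*} [DecidableEq n] (B : n → n → ℤ) (t h : n)
    (hskew : SkewSymm B) (hacyc : Acyclic B) (hth : t ≠ h) (hpos : 1 ≤ B t h) :
    Acyclic (subdividedQ B t h) :=
  stmt_2_general B t h hacyc hpos
end

section
/- Subdividing an arrow that lies on no maximal-length path preserves the maximal path length: let B : n → n → ℤ be skew-symmetric and acyclic on a finite type n, let ℓ ≥ 1 be the maximum length of an oriented path of B, and let t, h ∈ n be distinct with B t h ≥ 1 such that no oriented path v_0, …, v_ℓ of length ℓ has (v_r, v_{r+1}) = (t, h) for some r. Let B' be the skew-symmetric matrix on n ⊕ {v} defined by B' i j = B i j for i, j ∈ n with {i, j} ≠ {t, h}; B' t h = B t h − 1, B' h t = −(B t h − 1); B' t v = 1, B' v h = 1, B' v t = −1, B' h v = −1; and B' i v = B' v i = 0 for all other i ∈ n. Then the maximum length of an oriented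 path of B' is also ℓ. -/
/-!
A path of `B` of length `ℓ` never uses the arrow `t → h`, and `B h t < 0`, so it stays a path
after the subdivision. Conversely, by acyclicity an oriented path of the subdivided quiver
visits the new vertex `v` at most once. If `v` is an endpoint, renaming it to `t` or `h` gives
a path of `B` of the same length. If `v` is interior, the path reads `t → v → h`, and
shortcutting through the arrow `t → h` gives a path of `B` one step shorter that uses this
arrow, hence of length `< ℓ`.
-/

section Path

variable {α : Type*} {A : α → α → ℤ}

theorem IsPath.segment {m : ℕ} {w : Fin (m + 1) → α} (hw : IsPath A m w) (a k : ℕ)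
    (hak : a + k ≤ m) : IsPath A k fun i : Fin (k + 1) => w ⟨a + i, by omega⟩ :=
  fun r => hw ⟨a + r, by omega⟩

theorem isPath_comp_succAbove {k : ℕ} {w : Fin (k + 2) → α} (q : Fin k)
    (hw : ∀ r : Fin (k + 1), r ≠ q.castSucc → r ≠ q.succ → 0 < A (w r.castSucc) (w r.succ))
    (hq : 0 < A (w q.castSucc.castSucc) (w q.succ.succ)) :
    IsPath A k (w ∘ q.castSucc.succ.succAbove) := by
  intro r
  simp only [Function.comp_apply]
  rcases lt_trichotomy r q with hr | rfl | hr
  · have hr' : r.val < q.val := hr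
    rw [Fin.succAbove_of_castSucc_lt _ _ (Fin.lt_def.2 (by simp; omega)),
      Fin.succAbove_of_castSucc_lt _ _ (Fin.lt_def.2 (by simp; omega)), ← Fin.succ_castSucc]
    exact hw _ (by simpa using hr.ne) (by simp [Fin.ext_iff]; omega)
  · rwa [Fin.succAbove_succ_self, Fin.succ_succAbove_succ, Fin.succAbove_castSucc_self]
  · have hr' : q.val < r.val := hr
    rw [Fin.succAbove_of_le_castSucc _ _ (Fin.le_def.2 (by simp; omega)),
      Fin.succAbove_of_le_castSucc _ _ (Fin.le_def.2 (by simp; omega)), Fin.succ_castSucc]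
    exact hw _ (by simp [Fin.ext_iff]; omega) (by simpa using hr.ne')

end Path

section Subdivision

def contract {n : Type*} (c : n) : n ⊕ Unit → n := Sum.elim id fun _ => c

@[simp] theorem contract_inl {n : Type*} (c i : n) : contract c (Sum.inl i) = i := rfl

@[simp] theorem contract_inr {n : Type*} (c : n) (u : Unit) : contract c (Sum.inr u) = c := rfl

variable {n : Type*} [DecidableEq n] {B : n → n → ℤ} {t h : n}

open Sum

theorem pos_of_subdividedQ_pos (hpos : 1 ≤ B t h) {i j : n}
    (hij : 0 < subdividedQ B t h (inl i) (inl j)) : 0 < B i j := by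
  simp only [subdividedQ] at hij
  split_ifs at hij with hth hht
  · obtain ⟨rfl, rfl⟩ := hth
    omega
  · omega
  · exact hij

theorem subdividedQ_pos_of_pos (hskew : SkewSymm B) {i j : n} (hij : 0 < B i j)
    (hne : ¬ (i = t ∧ j = h)) : 0 < subdividedQ B t h (inl i) (inl j) := by
  simp only [subdividedQ, if_neg hne]
  split_ifs with hht
  · obtain ⟨rfl, rfl⟩ := hht
    have := hskew i j
    omega
  · exact hij

theorem eq_inl_of_subdividedQ_pos_inr {x : n ⊕ Unit} (hx : 0 < subdividedQ B t h x (inr ())) :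
    x = inl t := by
  rcases x with i | _
  · simp only [subdividedQ] at hx
    split_ifs at hx with hit
    · rw [hit]
    all_goals omega
  · simp [subdividedQ] at hx

theorem eq_inl_of_subdividedQ_inr_pos {y : n ⊕ Unit} (hy : 0 < subdividedQ B t h (inr ()) y) :
    y = inl h := by
  rcases y with j | _
  · simp only [subdividedQ] at hy
    split_ifs at hy with hjh
    · rw [hjh]
    all_goals omega
  · simp [subdividedQ] at hy

theorem pos_contract_head_of_subdividedQ_pos (hpos : 1 ≤ B t h) {x y : n ⊕ Unit}
    (hxy : 0 < subdividedQ B t h x y) (hx : x ≠ inr ()) :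
    0 < B (contract h x) (contract h y) := by
  rcases y with j | _
  · rcases x with i | _
    · exact pos_of_subdividedQ_pos hpos hxy
    · exact absurd rfl hx
  · rw [eq_inl_of_subdividedQ_pos_inr hxy, contract_inl, contract_inr]
    omega

theorem pos_contract_tail_of_subdividedQ_pos (hpos : 1 ≤ B t h) {x y : n ⊕ Unit}
    (hxy : 0 < subdividedQ B t h x y) (hy : y ≠ inr ()) :
    0 < B (contract t x) (contract t y) := by
  rcases x with i | _
  · rcases y with j | _
    · exact pos_of_subdividedQ_pos hpos hxy
    · exact absurd rfl hy
  · rw [eq_inl_of_subdividedQ_inr_pos hxy, contract_inl, contract_inr]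
    omega

variable {m : ℕ} {w : Fin (m + 1) → n ⊕ Unit}

theorem IsPath.contract_head (hpos : 1 ≤ B t h) (hw : IsPath (subdividedQ B t h) m w)
    (hv : ∀ r : Fin m, w r.castSucc ≠ inr ()) : IsPath B m (contract h ∘ w) :=
  fun r => pos_contract_head_of_subdividedQ_pos hpos (hw r) (hv r)

theorem IsPath.contract_tail (hpos : 1 ≤ B t h) (hw : IsPath (subdividedQ B t h) m w)
    (hv : ∀ r : Fin m, w r.succ ≠ inr ()) : IsPath B m (contract t ∘ w) :=
  fun r => pos_contract_tail_of_subdividedQ_pos hpos (hw r) (hv r)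

theorem IsPath.subdividedQ_eq_tail_of_succ_eq_inr (hw : IsPath (subdividedQ B t h) m w)
    {r : Fin m} (hr : w r.succ = inr ()) : w r.castSucc = inl t :=
  eq_inl_of_subdividedQ_pos_inr (hr ▸ hw r)

theorem IsPath.subdividedQ_eq_head_of_castSucc_eq_inr (hw : IsPath (subdividedQ B t h) m w)
    {r : Fin m} (hr : w r.castSucc = inr ()) : w r.succ = inl h :=
  eq_inl_of_subdividedQ_inr_pos (hr ▸ hw r)

/-- Between two consecutive visits `v → h → ⋯ → t → v` of the new vertex lies the oriented
cycle `h → ⋯ → t → h` of `B`. -/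
theorem IsPath.subdividedQ_inr_unique (hacyc : Acyclic B) (hpos : 1 ≤ B t h)
    (hw : IsPath (subdividedQ B t h) m w) {a b : Fin (m + 1)} (ha : w a = inr ())
    (hb : w b = inr ()) : a = b := by
  by_contra hne
  wlog hab : a < b generalizing a b
  · exact this hb ha (Ne.symm hne) ((Ne.symm hne).lt_of_le (not_lt.1 hab))
  obtain ⟨c, ⟨hac, hc⟩, hmin⟩ :=
    wellFounded_lt.has_min {c | a < c ∧ w c = inr ()} ⟨b, hab, hb⟩
  have hac' : a.val < c.val := hac
  have hhead : w ⟨a + 1, by omega⟩ = inl h :=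
    hw.subdividedQ_eq_head_of_castSucc_eq_inr (r := ⟨a, by omega⟩) ha
  set k := c.val - a.val - 1
  have hk : 1 ≤ k := by
    by_contra hk
    rw [show c = ⟨a + 1, by omega⟩ from Fin.ext (by simp only; omega), hhead] at hc
    exact inl_ne_inr hc
  have hlast : w ⟨a + 1 + k, by omega⟩ = inr () := by
    rw [← hc]
    exact congrArg w (Fin.ext (by simp only; omega))
  refine hacyc ⟨k, contract h ∘ fun i : Fin (k + 1) => w ⟨a + 1 + i, by omega⟩, hk,
    (hw.segment (a + 1) k (by omega)).contract_head hpos fun r hr => ?_, ?_⟩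
  · exact hmin _ ⟨Fin.lt_def.2 (by simp; omega), hr⟩ (Fin.lt_def.2 (by simp; omega))
  · simp [hlast, hhead]

theorem IsPath.exists_shortcut_subdividedQ (hacyc : Acyclic B) (hpos : 1 ≤ B t h) {k : ℕ}
    {w : Fin (k + 2) → n ⊕ Unit} (hw : IsPath (subdividedQ B t h) (k + 1) w) {q : Fin k}
    (hq : w q.castSucc.succ = inr ()) :
    ∃ u : Fin (k + 1) → n, IsPath B k u ∧ u q.castSucc = t ∧ u q.succ = h := by
  have ht : w q.castSucc.castSucc = inl t := hw.subdividedQ_eq_tail_of_succ_eq_inr hq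
  have hh : w q.succ.succ = inl h := hw.subdividedQ_eq_head_of_castSucc_eq_inr (r := q.succ) hq
  refine ⟨(contract h ∘ w) ∘ q.castSucc.succ.succAbove, isPath_comp_succAbove q
      (fun r _ hr => pos_contract_head_of_subdividedQ_pos hpos (hw r) fun hrv =>
        hr (Fin.castSucc_injective _ (hw.subdividedQ_inr_unique hacyc hpos hrv hq)))
      (by simp only [Function.comp_apply, ht, hh, contract_inl]; omega), ?_, ?_⟩ <;>
    simp [Fin.succAbove_succ_self, Fin.succ_succAbove_succ, ht, hh]

end Subdivision

theorem stmt_3_general {n : Type*} [DecidableEq n] (B : n → n → ℤ) (t h : n)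
    (ℓ : ℕ) (hskew : SkewSymm B) (hacyc : Acyclic B)
    (hmaxex : ∃ v : Fin (ℓ + 1) → n, IsPath B ℓ v)
    (hmaxub : ∀ (m : ℕ) (v : Fin (m + 1) → n), IsPath B m v → m ≤ ℓ)
    (hpos : 1 ≤ B t h)
    (hnot : ¬ ∃ v : Fin (ℓ + 1) → n, IsPath B ℓ v ∧
      ∃ r : Fin ℓ, v r.castSucc = t ∧ v r.succ = h) :
    (∃ v : Fin (ℓ + 1) → n ⊕ Unit, IsPath (subdividedQ B t h) ℓ v) ∧
      ∀ (m : ℕ) (v : Fin (m + 1) → n ⊕ Unit), IsPath (subdividedQ B t h) m v → m ≤ ℓ := by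
  constructor
  · obtain ⟨v, hv⟩ := hmaxex
    exact ⟨Sum.inl ∘ v, fun r => subdividedQ_pos_of_pos hskew (hv r) fun hr => hnot ⟨v, hv, r, hr⟩⟩
  intro m w hw
  by_cases hhead : ∀ r : Fin m, w r.castSucc ≠ Sum.inr ()
  · exact hmaxub m _ (hw.contract_head hpos hhead)
  by_cases htail : ∀ r : Fin m, w r.succ ≠ Sum.inr ()
  · exact hmaxub m _ (hw.contract_tail hpos htail)
  push Not at hhead htail
  obtain ⟨p, hp⟩ := hhead
  obtain ⟨q, hq⟩ := htail
  have hqp : q.succ = p.castSucc := hw.subdividedQ_inr_unique hacyc hpos hq hp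
  obtain ⟨k, rfl⟩ : ∃ k, m = k + 1 := ⟨m - 1, by simp [Fin.ext_iff] at hqp; omega⟩
  obtain ⟨q, rfl⟩ : ∃ q' : Fin k, q'.castSucc = q :=
    Fin.exists_castSucc_eq.2 fun hq => by simp [hq, Fin.ext_iff] at hqp; omega
  obtain ⟨u, hu, hut, huh⟩ := hw.exists_shortcut_subdividedQ hacyc hpos hq
  have hkℓ : k ≠ ℓ := by
    rintro rfl
    exact hnot ⟨u, hu, q, hut, huh⟩
  have := hmaxub k u hu
  omega

/-- Subdividing an arrow lying on no maximal-length oriented path preserves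
the maximal path length. -/
theorem stmt_3 {n : Type*} [Fintype n] [DecidableEq n] (B : n → n → ℤ) (t h : n)
    (ℓ : ℕ) (hskew : SkewSymm B) (hacyc : Acyclic B)
    (hℓ : 1 ≤ ℓ)
    (hmaxex : ∃ v : Fin (ℓ + 1) → n, IsPath B ℓ v)
    (hmaxub : ∀ (m : ℕ) (v : Fin (m + 1) → n), IsPath B m v → m ≤ ℓ)
    (hth : t ≠ h) (hpos : 1 ≤ B t h)
    (hnot : ¬ ∃ v : Fin (ℓ + 1) → n, IsPath B ℓ v ∧
      ∃ r : Fin ℓ, v r.castSucc = t ∧ v r.succ = h) :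
    (∃ v : Fin (ℓ + 1) → n ⊕ Unit, IsPath (subdividedQ B t h) ℓ v) ∧
      ∀ (m : ℕ) (v : Fin (m + 1) → n ⊕ Unit), IsPath (subdividedQ B t h) m v → m ≤ ℓ :=
  stmt_3_general B t h ℓ hskew hacyc hmaxex hmaxub hpos hnot
end

section
/- If every arrow lies on a maximal-length path, then all maximal oriented paths have the same length: let B : n → n → ℤ be skew-symmetric and acyclic on a finite type n, let ℓ ≥ 1 be the maximum length of an oriented path of B, and suppose every pair (t, h) with B t h > 0 lies on some oriented path of length ℓ (i.e., there is a path v_0, …, v_ℓ with (v_r, v_{r+1}) = (t, h) for some r). Then every maximal oriented path of B has length exactly ℓ, where an oriented path v_0, …, v_m is maximal if there is no vertex u with B u v_0 > 0 and no vertex w with B v_m w > 0. -/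
/-!
For a vertex `x` let `inDepth x` and `outDepth x` be the lengths of the longest oriented
paths ending, resp. starting, at `x`. Concatenating paths gives `inDepth t + 1 ≤ inDepth h`
and `inDepth h + outDepth h ≤ ℓ` for every arrow `t → h`, while an `ℓ`-path through `t → h`
gives `ℓ ≤ inDepth t + 1 + outDepth h`. Hence `inDepth` increases by exactly one along every
arrow and `inDepth t + 1 + outDepth h = ℓ`. A maximal path `v₀ → ⋯ → vₘ` starts at a source, so
`inDepth vᵣ = r`, and ends at a sink, so its last arrow gives `(m - 1) + 1 + 0 = ℓ`.
-/

section

variable {n : Type*} {B : n → n → ℤ}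

/-- Oriented paths as sequences `ℕ → n`, of which only the first `m + 1` terms matter; unlike
`Fin`-indexed paths these can be cut and concatenated without casts. -/
def IsPathSeq (B : n → n → ℤ) (m : ℕ) (v : ℕ → n) : Prop :=
  ∀ r < m, 0 < B (v r) (v (r + 1))

namespace IsPathSeq

variable {m k : ℕ} {v : ℕ → n}

theorem of_length_zero : IsPathSeq B 0 v :=
  fun _ h => absurd h (Nat.not_lt_zero _)

theorem isPath (h : IsPathSeq B m v) : IsPath B m (fun i => v i) :=
  fun r => h r r.isLt

theorem mono (h : IsPathSeq B m v) (hk : k ≤ m) : IsPathSeq B k v :=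
  fun r hr => h r (by omega)

theorem shift (h : IsPathSeq B m v) (k : ℕ) : IsPathSeq B (m - k) (fun s => v (k + s)) :=
  fun r hr => h (k + r) (by omega)

theorem snoc [DecidableEq n] (h : IsPathSeq B m v) {x : n} (hx : 0 < B (v m) x) :
    IsPathSeq B (m + 1) (Function.update v (m + 1) x) := by
  intro r hr
  rw [Function.update_of_ne (by omega : r ≠ m + 1)]
  rcases Nat.lt_succ_iff_lt_or_eq.mp hr with hr | rfl
  · rw [Function.update_of_ne (by omega : r + 1 ≠ m + 1)]
    exact h r hr
  · rwa [Function.update_self]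

theorem append {p q : ℕ} {a b : ℕ → n} (ha : IsPathSeq B p a) (hb : IsPathSeq B q b)
    (hab : a p = b 0) : IsPathSeq B (p + q) (fun r => if r ≤ p then a r else b (r - p)) := by
  intro r hr
  rcases lt_trichotomy r p with h | rfl | h
  · simpa [h.le, Nat.succ_le_of_lt h] using ha r h
  · simpa [hab] using hb 0 (by omega)
  · simpa [show ¬r ≤ p by omega, show ¬r < p by omega, show r + 1 - p = r - p + 1 by omega]
      using hb (r - p) (by omega)

end IsPathSeq

theorem Fin.clamp_val_eq_self {m : ℕ} (i : Fin (m + 1)) : Fin.clamp i m = i := by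
  ext; simp [Fin.clamp]; omega

theorem IsPath.isPathSeq {m : ℕ} {v : Fin (m + 1) → n} (h : IsPath B m v) :
    IsPathSeq B m (fun s => v (Fin.clamp s m)) := by
  intro r hr
  have e₁ : Fin.clamp r m = (⟨r, hr⟩ : Fin m).castSucc := by ext; simp [Fin.clamp]; omega
  have e₂ : Fin.clamp (r + 1) m = (⟨r, hr⟩ : Fin m).succ := by ext; simp [Fin.clamp]; omega
  simp only [e₁, e₂]
  exact h _

def PathLengthLE (B : n → n → ℤ) (ℓ : ℕ) : Prop :=
  ∀ (m : ℕ) (v : Fin (m + 1) → n), IsPath B m v → m ≤ ℓ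

def ArrowsOnPathsOfLength (B : n → n → ℤ) (ℓ : ℕ) : Prop :=
  ∀ t h : n, 0 < B t h → ∃ v : Fin (ℓ + 1) → n, IsPath B ℓ v ∧
    ∃ r : Fin ℓ, v r.castSucc = t ∧ v r.succ = h

section Depth

open Classical

variable {ℓ : ℕ}

/-- `findGreatest` caps the search at `ℓ`, which is no restriction under `PathLengthLE B ℓ`. -/
noncomputable def inDepth (B : n → n → ℤ) (ℓ : ℕ) (x : n) : ℕ :=
  Nat.findGreatest (fun m => ∃ v, IsPathSeq B m v ∧ v m = x) ℓ

noncomputable def outDepth (B : n → n → ℤ) (ℓ : ℕ) (x : n) : ℕ :=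
  Nat.findGreatest (fun m => ∃ v, IsPathSeq B m v ∧ v 0 = x) ℓ

theorem exists_isPathSeq_inDepth (x : n) :
    ∃ v, IsPathSeq B (inDepth B ℓ x) v ∧ v (inDepth B ℓ x) = x :=
  Nat.findGreatest_spec (P := fun m => ∃ v, IsPathSeq B m v ∧ v m = x) (Nat.zero_le ℓ)
    ⟨fun _ => x, .of_length_zero, rfl⟩

theorem exists_isPathSeq_outDepth (x : n) :
    ∃ v, IsPathSeq B (outDepth B ℓ x) v ∧ v 0 = x :=
  Nat.findGreatest_spec (P := fun m => ∃ v, IsPathSeq B m v ∧ v 0 = x) (Nat.zero_le ℓ)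
    ⟨fun _ => x, .of_length_zero, rfl⟩

theorem IsPathSeq.le_inDepth {m : ℕ} {v : ℕ → n} (h : IsPathSeq B m v) (hm : m ≤ ℓ) :
    m ≤ inDepth B ℓ (v m) :=
  Nat.le_findGreatest hm ⟨v, h, rfl⟩

theorem IsPathSeq.le_outDepth {m : ℕ} {v : ℕ → n} (h : IsPathSeq B m v) (hm : m ≤ ℓ) :
    m ≤ outDepth B ℓ (v 0) :=
  Nat.le_findGreatest hm ⟨v, h, rfl⟩

theorem inDepth_eq_zero {x : n} (hx : ¬∃ u, 0 < B u x) : inDepth B ℓ x = 0 := by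
  obtain ⟨v, hv, hvx⟩ := exists_isPathSeq_inDepth (B := B) (ℓ := ℓ) x
  by_contra hne
  obtain ⟨d, hd⟩ := Nat.exists_eq_succ_of_ne_zero hne
  rw [hd] at hv hvx
  exact hx ⟨v d, hvx ▸ hv d d.lt_succ_self⟩

theorem outDepth_eq_zero {x : n} (hx : ¬∃ w, 0 < B x w) : outDepth B ℓ x = 0 := by
  obtain ⟨v, hv, hvx⟩ := exists_isPathSeq_outDepth (B := B) (ℓ := ℓ) x
  by_contra hne
  exact hx ⟨v 1, hvx ▸ hv 0 (Nat.pos_of_ne_zero hne)⟩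

theorem inDepth_add_outDepth_le (hub : PathLengthLE B ℓ) (x : n) :
    inDepth B ℓ x + outDepth B ℓ x ≤ ℓ := by
  obtain ⟨a, ha, hax⟩ := exists_isPathSeq_inDepth (B := B) (ℓ := ℓ) x
  obtain ⟨b, hb, hbx⟩ := exists_isPathSeq_outDepth (B := B) (ℓ := ℓ) x
  exact hub _ _ (ha.append hb (hax.trans hbx.symm)).isPath

theorem inDepth_add_one_le (hub : PathLengthLE B ℓ) {t h : n} (hth : 0 < B t h) :
    inDepth B ℓ t + 1 ≤ inDepth B ℓ h := by
  obtain ⟨a, ha, hat⟩ := exists_isPathSeq_inDepth (B := B) (ℓ := ℓ) t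
  have hext := ha.snoc (x := h) (by rwa [hat])
  simpa using hext.le_inDepth (hub _ _ hext.isPath)

theorem le_inDepth_add_one_add_outDepth (harrow : ArrowsOnPathsOfLength B ℓ) {t h : n}
    (hth : 0 < B t h) : ℓ ≤ inDepth B ℓ t + 1 + outDepth B ℓ h := by
  obtain ⟨w, hw, r, hrt, hrh⟩ := harrow t h hth
  have hs := hw.isPathSeq
  have hprefix : (r : ℕ) ≤ inDepth B ℓ t := by
    have e : Fin.clamp r ℓ = r.castSucc := Fin.clamp_val_eq_self r.castSucc
    simpa [e, hrt] using (hs.mono r.is_lt.le).le_inDepth r.is_lt.le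
  have hsuffix : ℓ - (r + 1) ≤ outDepth B ℓ h := by
    have e : Fin.clamp (r + 1) ℓ = r.succ := Fin.clamp_val_eq_self r.succ
    simpa [e, hrh] using (hs.shift (r + 1)).le_outDepth (Nat.sub_le ℓ (r + 1))
  omega

theorem inDepth_add_one_add_outDepth_eq (hub : PathLengthLE B ℓ)
    (harrow : ArrowsOnPathsOfLength B ℓ)
    {t h : n} (hth : 0 < B t h) : inDepth B ℓ t + 1 + outDepth B ℓ h = ℓ := by
  have := inDepth_add_one_le hub hth
  have := inDepth_add_outDepth_le hub h
  have := le_inDepth_add_one_add_outDepth harrow hth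
  omega

theorem inDepth_eq_add_one (hub : PathLengthLE B ℓ) (harrow : ArrowsOnPathsOfLength B ℓ)
    {t h : n} (hth : 0 < B t h) : inDepth B ℓ h = inDepth B ℓ t + 1 := by
  have := inDepth_add_one_le hub hth
  have := inDepth_add_outDepth_le hub h
  have := le_inDepth_add_one_add_outDepth harrow hth
  omega

theorem IsPathSeq.inDepth_eq (hub : PathLengthLE B ℓ) (harrow : ArrowsOnPathsOfLength B ℓ)
    {m : ℕ} {v : ℕ → n} (hv : IsPathSeq B m v) (h₀ : inDepth B ℓ (v 0) = 0) :
    ∀ r ≤ m, inDepth B ℓ (v r) = r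
  | 0, _ => h₀
  | r + 1, hr => by
    rw [inDepth_eq_add_one hub harrow (hv r hr), hv.inDepth_eq hub harrow h₀ r (by omega)]

end Depth

end

theorem stmt_5_general {n : Type*} (B : n → n → ℤ) (ℓ : ℕ)
    (hmaxub : ∀ (m : ℕ) (v : Fin (m + 1) → n), IsPath B m v → m ≤ ℓ)
    (harrow : ∀ t h : n, 0 < B t h →
      ∃ v : Fin (ℓ + 1) → n, IsPath B ℓ v ∧
        ∃ r : Fin ℓ, v r.castSucc = t ∧ v r.succ = h) :
    ∀ (m : ℕ) (v : Fin (m + 1) → n), 1 ≤ m → IsMaxPath B m v → m = ℓ := by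
  rintro m v hm ⟨hv, hsource, hsink⟩
  have hw := hv.isPathSeq
  have hfirst : Fin.clamp 0 m = 0 := Fin.clamp_val_eq_self 0
  have hlast : Fin.clamp m m = Fin.last m := Fin.clamp_val_eq_self (Fin.last m)
  have hdepth := hw.inDepth_eq hmaxub harrow (inDepth_eq_zero (by simpa [hfirst] using hsource))
  have hlastArrow := hw (m - 1) (by omega)
  rw [Nat.sub_add_cancel hm] at hlastArrow
  have hlength := inDepth_add_one_add_outDepth_eq hmaxub harrow hlastArrow
  rw [hdepth (m - 1) (by omega), outDepth_eq_zero (by simpa [hlast] using hsink)] at hlength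
  omega

/-- If every arrow lies on a maximal-length oriented path, then all maximal
oriented paths have the same length. -/
theorem stmt_5 {n : Type*} [Fintype n] (B : n → n → ℤ) (ℓ : ℕ)
    (hskew : SkewSymm B) (hacyc : Acyclic B) (hℓ : 1 ≤ ℓ)
    (hmaxex : ∃ v : Fin (ℓ + 1) → n, IsPath B ℓ v)
    (hmaxub : ∀ (m : ℕ) (v : Fin (m + 1) → n), IsPath B m v → m ≤ ℓ)
    (harrow : ∀ t h : n, 0 < B t h →
      ∃ v : Fin (ℓ + 1) → n, IsPath B ℓ v ∧
        ∃ r : Fin ℓ, v r.castSucc = t ∧ v r.succ = h) :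
    ∀ (m : ℕ) (v : Fin (m + 1) → n), 1 ≤ m → IsMaxPath B m v → m = ℓ :=
  stmt_5_general B ℓ hmaxub harrow
end

section
/- Mutation at a source preserves acyclicity: let B : n → n → ℤ be skew-symmetric and acyclic on a finite type n, and let s ∈ n be a source (B s j ≥ 0 for all j). Then μ_s(B) is acyclic. -/
theorem IsPath.exists_pos_of_cycle {n : Type*} {B : n → n → ℤ} {m : ℕ}
    {v : Fin (m + 1) → n} (hv : IsPath B m v) (hm : 1 ≤ m) (hcyc : v 0 = v (Fin.last m))
    (r : Fin (m + 1)) : ∃ w, 0 < B (v r) w := by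
  obtain ⟨r, rfl⟩ | rfl := r.eq_castSucc_or_eq_last
  · exact ⟨_, hv r⟩
  · rw [← hcyc]
    exact ⟨_, hv ⟨0, hm⟩⟩

theorem mutate_apply_self_left {n : Type*} [DecidableEq n] (B : n → n → ℤ) (k j : n) :
    mutate B k k j = -B k j := by
  simp [mutate]

theorem mutate_apply_of_source {n : Type*} [DecidableEq n] {B : n → n → ℤ} {s : n}
    (hskew : SkewSymm B) (hsrc : ∀ j, 0 ≤ B s j) {i j : n} (hi : i ≠ s) (hj : j ≠ s) :
    mutate B s i j = B i j := by
  have hin : max (B i s) 0 = 0 := by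
    rw [hskew i s]
    exact max_eq_right (by linarith [hsrc i])
  have hout : max (-B s j) 0 = 0 := max_eq_right (by linarith [hsrc j])
  simp [mutate, hi, hj, hin, hout]

theorem stmt_7_general {n : Type*} [DecidableEq n] (B : n → n → ℤ) (s : n)
    (hskew : SkewSymm B) (hacyc : Acyclic B) (hsrc : ∀ j, 0 ≤ B s j) :
    Acyclic (mutate B s) := by
  rintro ⟨m, v, hm, hpath, hcyc⟩
  -- `s` becomes a sink, so the cycle avoids it, and away from `s` nothing changes.
  have havoid : ∀ r, v r ≠ s := by
    intro r hr
    obtain ⟨w, hw⟩ := hpath.exists_pos_of_cycle hm hcyc r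
    rw [hr, mutate_apply_self_left] at hw
    linarith [hsrc w]
  refine hacyc ⟨m, v, hm, fun r => ?_, hcyc⟩
  simpa only [mutate_apply_of_source hskew hsrc (havoid _) (havoid _)] using hpath r

/-- Mutation at a source preserves acyclicity. -/
theorem stmt_7 {n : Type*} [Fintype n] [DecidableEq n] (B : n → n → ℤ) (s : n)
    (hskew : SkewSymm B) (hacyc : Acyclic B) (hsrc : ∀ j, 0 ≤ B s j) :
    Acyclic (mutate B s) :=
  stmt_7_general B s hskew hacyc hsrc
end

section
/- Step 2 decrement: let B : n → n → ℤ be skew-symmetric and acyclic on a finite type n, and suppose every maximal oriented path of B has length exactly L for some L ≥ 2 (an oriented path v_0, …, v_m is maximal if there is no vertex u with B u v_0 > 0 and no vertex w with B v_m w > 0). Let S = {s : B s j ≥ 0 for all j} be the set of sources of B, and let B' be the matrix with B' i j = −B i j if exactly one of i, j lies in S, and B' i j = B i j otherwise (this is the result of mutating B at all of its sources). Then B' is acyclic and every maximal oriented path of B' has length 1 or L − 1. -/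
section

variable {n : Type*} {B : n → n → ℤ} {m : ℕ} {x y z : n}

def IsSource (B : n → n → ℤ) (s : n) : Prop := ∀ j, 0 ≤ B s j

def IsSink (B : n → n → ℤ) (t : n) : Prop := ∀ j, B t j ≤ 0

def HasPath (B : n → n → ℤ) (m : ℕ) (x y : n) : Prop :=
  ∃ v : Fin (m + 1) → n, IsPath B m v ∧ v 0 = x ∧ v (Fin.last m) = y

theorem hasPath_zero_iff : HasPath B 0 x y ↔ x = y := by
  constructor
  · rintro ⟨v, -, rfl, rfl⟩
    rfl
  · rintro rfl
    exact ⟨fun _ => x, fun r => r.elim0, rfl, rfl⟩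

theorem hasPath_succ_iff : HasPath B (m + 1) x z ↔ ∃ y, 0 < B x y ∧ HasPath B m y z := by
  constructor
  · rintro ⟨v, hv, rfl, rfl⟩
    refine ⟨_, hv 0, Fin.tail v, fun r => ?_, rfl, rfl⟩
    simpa [Fin.tail, ← Fin.succ_castSucc] using hv r.succ
  · rintro ⟨y, hxy, v, hv, rfl, rfl⟩
    refine ⟨Fin.cons x v, Fin.cases hxy fun r => ?_, rfl, rfl⟩
    simpa [← Fin.succ_castSucc] using hv r

theorem hasPath_one_iff : HasPath B 1 x y ↔ 0 < B x y := by
  simp [hasPath_succ_iff, hasPath_zero_iff]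

theorem hasPath_succ_iff' : HasPath B (m + 1) x z ↔ ∃ y, HasPath B m x y ∧ 0 < B y z := by
  induction m generalizing x with
  | zero => simp [hasPath_one_iff, hasPath_zero_iff]
  | succ m ih =>
    rw [hasPath_succ_iff]
    simp only [ih, hasPath_succ_iff (m := m)]
    grind

theorem HasPath.trans {a b : ℕ} (hxy : HasPath B a x y) (hyz : HasPath B b y z) :
    HasPath B (a + b) x z := by
  induction a generalizing x with
  | zero => rwa [hasPath_zero_iff.1 hxy, zero_add]
  | succ a ih =>
    obtain ⟨w, hxw, hwy⟩ := hasPath_succ_iff.1 hxy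
    rw [Nat.add_right_comm]
    exact hasPath_succ_iff.2 ⟨w, hxw, ih hwy⟩

theorem acyclic_iff : Acyclic B ↔ ∀ m x, ¬HasPath B (m + 1) x x := by
  constructor
  · rintro h m x ⟨v, hv, h0, hl⟩
    exact h ⟨m + 1, v, by omega, hv, h0.trans hl.symm⟩
  · rintro h ⟨m, v, hm, hv, hcyc⟩
    obtain ⟨k, rfl⟩ := Nat.exists_eq_add_of_le' hm
    exact h k _ ⟨v, hv, rfl, hcyc.symm⟩

theorem exists_hasPath_of_transGen (h : Relation.TransGen (fun a b => 0 < B b a) x y) :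
    ∃ m, HasPath B (m + 1) y x := by
  induction h with
  | single h => exact ⟨0, hasPath_one_iff.2 h⟩
  | tail _ h ih =>
    obtain ⟨m, hm⟩ := ih
    exact ⟨m + 1, hasPath_succ_iff.2 ⟨_, h, hm⟩⟩

theorem Acyclic.wellFounded [Finite n] (hB : Acyclic B) : WellFounded fun a b => 0 < B b a := by
  have : Std.Irrefl (Relation.TransGen fun a b => 0 < B b a) := ⟨fun x hx => by
    obtain ⟨m, hm⟩ := exists_hasPath_of_transGen hx
    exact acyclic_iff.1 hB m x hm⟩
  exact (Finite.wellFounded_of_trans_of_irrefl (Relation.TransGen fun a b => 0 < B b a)).mono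
    fun _ _ h => .single h

theorem Acyclic.exists_hasPath_isSink [Finite n] (hB : Acyclic B) (x : n) :
    ∃ d y, HasPath B d x y ∧ IsSink B y := by
  induction x using hB.wellFounded.induction with
  | _ x ih =>
  by_cases hx : IsSink B x
  · exact ⟨0, x, hasPath_zero_iff.2 rfl, hx⟩
  · obtain ⟨y, hxy⟩ : ∃ y, 0 < B x y := by simpa [IsSink] using hx
    obtain ⟨d, z, hyz, hz⟩ := ih y hxy
    exact ⟨d + 1, z, hasPath_succ_iff.2 ⟨y, hxy, hyz⟩, hz⟩

theorem SkewSymm.isSource_iff (hB : SkewSymm B) : IsSource B x ↔ ∀ u, B u x ≤ 0 :=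
  forall_congr' fun u => by rw [hB x u]; omega

theorem SkewSymm.exists_isMaxPath_iff (hB : SkewSymm B) :
    (∃ v, IsMaxPath B m v) ↔ ∃ x y, HasPath B m x y ∧ IsSource B x ∧ IsSink B y := by
  simp only [IsMaxPath, HasPath, hB.isSource_iff, IsSink, not_exists, not_lt]
  constructor
  · rintro ⟨v, hv, h0, hl⟩
    exact ⟨_, _, ⟨v, hv, rfl, rfl⟩, h0, hl⟩
  · rintro ⟨_, _, ⟨v, hv, rfl, rfl⟩, h0, hl⟩
    exact ⟨v, hv, h0, hl⟩

theorem Acyclic.eq_of_hasPath_of_isSource [Finite n] {L a b : ℕ} {s t : n} (hacyc : Acyclic B)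
    (hmax : ∀ m x y, 1 ≤ m → HasPath B m x y → IsSource B x → IsSink B y → m = L)
    (ha : HasPath B a s x) (hb : HasPath B b t x) (hs : IsSource B s) (ht : IsSource B t)
    (ha1 : 1 ≤ a) (hb1 : 1 ≤ b) : a = b := by
  obtain ⟨d, y, hxy, hy⟩ := hacyc.exists_hasPath_isSink x
  have := hmax _ _ _ (by omega) (ha.trans hxy) hs hy
  have := hmax _ _ _ (by omega) (hb.trans hxy) ht hy
  omega

/-- Sources are pairwise non-adjacent and the Fomin–Zelevinsky mutation at a source only reverses
its arrows, so the mutations at all sources commute and their composite reverses exactly the arrows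
incident to a source. -/
noncomputable def mutateAtSources (B : n → n → ℤ) : n → n → ℤ :=
  open scoped Classical in
  fun i j => if Xor (IsSource B i) (IsSource B j) then -B i j else B i j

theorem SkewSymm.mutateAtSources (hB : SkewSymm B) : SkewSymm (mutateAtSources B) := by
  intro i j
  by_cases hi : IsSource B i <;> by_cases hj : IsSource B j <;>
    simp [_root_.mutateAtSources, hi, hj, hB i j]

theorem mutateAtSources_pos_iff (hB : SkewSymm B) {i j : n} :
    0 < mutateAtSources B i j ↔
      ¬IsSource B i ∧ (IsSource B j ∧ 0 < B j i ∨ ¬IsSource B j ∧ 0 < B i j) := by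
  have hij := hB i j
  have hi' : IsSource B i → 0 ≤ B i j := fun hi => hi j
  have hj' : IsSource B j → 0 ≤ B j i := fun hj => hj i
  by_cases hi : IsSource B i <;> by_cases hj : IsSource B j <;>
    simp [mutateAtSources, hi, hj] at hi' hj' ⊢ <;> omega

theorem not_isSource_of_hasPath_succ_mutateAtSources (hB : SkewSymm B)
    (h : HasPath (mutateAtSources B) (m + 1) x y) : ¬IsSource B x := by
  obtain ⟨w, hxw, -⟩ := hasPath_succ_iff.1 h
  exact ((mutateAtSources_pos_iff hB).1 hxw).1

theorem not_isSource_of_hasPath_mutateAtSources (hB : SkewSymm B)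
    (h : HasPath (mutateAtSources B) m x y) (hy : ¬IsSource B y) : ¬IsSource B x := by
  cases m with
  | zero => rwa [hasPath_zero_iff.1 h]
  | succ m => exact not_isSource_of_hasPath_succ_mutateAtSources hB h

theorem hasPath_of_hasPath_mutateAtSources (hB : SkewSymm B)
    (h : HasPath (mutateAtSources B) m x y) (hy : ¬IsSource B y) : HasPath B m x y := by
  induction m generalizing x with
  | zero => exact hasPath_zero_iff.2 (hasPath_zero_iff.1 h)
  | succ m ih =>
    obtain ⟨w, hxw, hwy⟩ := hasPath_succ_iff.1 h
    have hw := not_isSource_of_hasPath_mutateAtSources hB hwy hy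
    have hxw' : 0 < B x w := by have := (mutateAtSources_pos_iff hB).1 hxw; tauto
    exact hasPath_succ_iff.2 ⟨w, hxw', ih hwy⟩

theorem Acyclic.mutateAtSources (hB : SkewSymm B) (hacyc : Acyclic B) :
    Acyclic (mutateAtSources B) :=
  acyclic_iff.2 fun m x hx => acyclic_iff.1 hacyc m x <| hasPath_of_hasPath_mutateAtSources hB hx
    (not_isSource_of_hasPath_succ_mutateAtSources hB hx)

theorem exists_isSource_pos_of_isSource_mutateAtSources (hB : SkewSymm B)
    (hx : ¬IsSource B x) (hx' : IsSource (mutateAtSources B) x) :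
    ∃ s, IsSource B s ∧ 0 < B s x := by
  obtain ⟨s, hs⟩ : ∃ s, B x s < 0 := by simpa [IsSource] using hx
  have hsx : 0 < B s x := by linarith [hB s x]
  refine ⟨s, by_contra fun hs' => ?_, hsx⟩
  exact (hB.mutateAtSources.isSource_iff.1 hx' s).not_gt
    ((mutateAtSources_pos_iff hB).2 ⟨hs', .inr ⟨hx, hsx⟩⟩)

theorem IsSink.of_mutateAtSources (hB : SkewSymm B) (hy : ¬IsSource B y)
    (hy' : IsSink (mutateAtSources B) y) : IsSink B y := by
  intro z
  by_contra! hz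
  have hz' : ¬IsSource B z := fun hz' => by linarith [hz' y, hB z y]
  exact (hy' z).not_gt ((mutateAtSources_pos_iff hB).2 ⟨hy, .inr ⟨hz', hz⟩⟩)

theorem length_eq_of_isMaxPath_mutateAtSources [Finite n] {L : ℕ} (hB : SkewSymm B)
    (hacyc : Acyclic B)
    (hmax : ∀ m x y, 1 ≤ m → HasPath B m x y → IsSource B x → IsSink B y → m = L)
    (hp : HasPath (mutateAtSources B) (m + 1) x y) (hx : IsSource (mutateAtSources B) x)
    (hy : IsSink (mutateAtSources B) y) : m + 1 = 1 ∨ m + 1 = L - 1 := by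
  have hx' := not_isSource_of_hasPath_succ_mutateAtSources hB hp
  obtain ⟨s, hs, hsx⟩ := exists_isSource_pos_of_isSource_mutateAtSources hB hx' hx
  by_cases hys : IsSource B y
  · obtain ⟨w, hxw, hwy⟩ := hasPath_succ_iff'.1 hp
    obtain ⟨hw, hyw⟩ : ¬IsSource B w ∧ 0 < B y w := by
      have := (mutateAtSources_pos_iff hB).1 hwy; tauto
    have hsw : HasPath B (m + 1) s w :=
      hasPath_succ_iff.2 ⟨x, hsx, hasPath_of_hasPath_mutateAtSources hB hxw hw⟩
    exact .inl (hacyc.eq_of_hasPath_of_isSource hmax hsw (hasPath_one_iff.2 hyw) hs hys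
      (by omega) le_rfl)
  · have hsy : HasPath B (m + 2) s y :=
      hasPath_succ_iff.2 ⟨x, hsx, hasPath_of_hasPath_mutateAtSources hB hp hys⟩
    have := hmax _ s y (by omega) hsy hs (hy.of_mutateAtSources hB hys)
    exact .inr (by omega)

end

open scoped Classical in
theorem stmt_9_general {n : Type*} [Fintype n] (B B' : n → n → ℤ) (L : ℕ)
    (hskew : SkewSymm B) (hacyc : Acyclic B)
    (hmax : ∀ (m : ℕ) (v : Fin (m + 1) → n), 1 ≤ m → IsMaxPath B m v → m = L)
    (hB' : ∀ i j, B' i j =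
      if Xor' (∀ k, 0 ≤ B i k) (∀ k, 0 ≤ B j k) then -B i j else B i j) :
    Acyclic B' ∧
      ∀ (m : ℕ) (v : Fin (m + 1) → n), 1 ≤ m → IsMaxPath B' m v →
        m = 1 ∨ m = L - 1 := by
  obtain rfl : B' = mutateAtSources B := by
    ext i j
    exact (hB' i j).trans (if_congr Iff.rfl rfl rfl)
  have hmax' : ∀ m x y, 1 ≤ m → HasPath B m x y → IsSource B x → IsSink B y → m = L :=
    fun m x y hm hxy hx hy =>
      let ⟨v, hv⟩ := hskew.exists_isMaxPath_iff.2 ⟨x, y, hxy, hx, hy⟩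
      hmax m v hm hv
  refine ⟨hacyc.mutateAtSources hskew, fun m v hm hv => ?_⟩
  obtain ⟨x, y, hxy, hx, hy⟩ := hskew.mutateAtSources.exists_isMaxPath_iff.1 ⟨v, hv⟩
  obtain ⟨k, rfl⟩ := Nat.exists_eq_add_of_le' hm
  exact length_eq_of_isMaxPath_mutateAtSources hskew hacyc hmax' hxy hx hy

open scoped Classical in
/-- Step 2 decrement: mutating simultaneously at all sources of an acyclic
quiver all of whose maximal oriented paths have length `L ≥ 2` yields an
acyclic quiver all of whose maximal oriented paths have length `1` or `L - 1`. -/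
theorem stmt_9 {n : Type*} [Fintype n] (B B' : n → n → ℤ) (L : ℕ)
    (hskew : SkewSymm B) (hacyc : Acyclic B) (hL : 2 ≤ L)
    (hmax : ∀ (m : ℕ) (v : Fin (m + 1) → n), 1 ≤ m → IsMaxPath B m v → m = L)
    (hB' : ∀ i j, B' i j =
      if Xor' (∀ k, 0 ≤ B i k) (∀ k, 0 ≤ B j k) then -B i j else B i j) :
    Acyclic B' ∧
      ∀ (m : ℕ) (v : Fin (m + 1) → n), 1 ≤ m → IsMaxPath B' m v →
        m = 1 ∨ m = L - 1 :=
  stmt_9_general B B' L hskew hacyc hmax hB'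
end

section
/- An acyclic quiver in which all maximal oriented paths have equal length is mutation equivalent to a bipartite quiver: let B : n → n → ℤ be skew-symmetric and acyclic on a finite type n, and suppose there is ℓ ≥ 1 such that every maximal oriented path of B has length exactly ℓ (an oriented path v_0, …, v_m is maximal if there is no vertex u with B u v_0 > 0 and no vertex w with B v_m w > 0). Then B is mutation equivalent to a bipartite skew-symmetric matrix C : n → n → ℤ. -/
/-!
Let `height v` be the length of a longest oriented path ending at `v`. When all maximal paths
have length `ℓ`, every arrow `i → j` satisfies `height j = height i + 1`: a longest path into `i`
followed by the arrow, and a longest path into `j`, both start at a source, and continuing each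
by one longest path out of `j` gives two maximal paths, hence two paths of length `ℓ`.

Mutation at a sink only reverses the arrows at that sink, so a sequence of sink mutations turns
`B` into the sign twist `(-1) ^ (s i + s j) * B i j`, where `s v` counts the mutations at `v`.
In the graded quiver, mutating the levels `ℓ, ℓ - 1, …, 2t + 2` in turn (each one consists of
sinks when its turn comes) reverses exactly the arrows between levels `2t + 1` and `2t + 2`.
Doing this for `t = 0, 1, 2, …` gives the twist by `s v = height v / 2`, in which vertices of
even height are sources and those of odd height are sinks.
-/

namespace ExchangeMatrix

variable {n : Type*}

section Paths

/-- `IsPath` with vertices indexed by `ℕ` (only `v 0, …, v m` matter), so that paths are easy to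
concatenate. -/
def IsPathSeq (B : n → n → ℤ) (m : ℕ) (v : ℕ → n) : Prop :=
  ∀ r < m, 0 < B (v r) (v (r + 1))

def MaxPathsOfLength (B : n → n → ℤ) (ℓ : ℕ) : Prop :=
  ∀ (m : ℕ) (v : Fin (m + 1) → n), 1 ≤ m → IsMaxPath B m v → m = ℓ

def seqAppend (m : ℕ) (u w : ℕ → n) : ℕ → n := fun r => if r < m then u r else w (r - m)

def edgeSeq (i j : n) : ℕ → n := fun r => if r = 0 then i else j

variable {B : n → n → ℤ} {m k : ℕ} {u w : ℕ → n}

theorem isPathSeq_zero (u : ℕ → n) : IsPathSeq B 0 u := fun r hr => absurd hr r.not_lt_zero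

theorem isPathSeq_edgeSeq {i j : n} (h : 0 < B i j) : IsPathSeq B 1 (edgeSeq i j) := by
  intro r hr
  obtain rfl : r = 0 := by omega
  simpa [edgeSeq] using h

theorem IsPathSeq.isPath (h : IsPathSeq B m u) : IsPath B m fun i => u i :=
  fun r => h r r.isLt

theorem seqAppend_zero (he : u m = w 0) : seqAppend m u w 0 = u 0 := by
  rcases Nat.eq_zero_or_pos m with rfl | hm
  · simp [seqAppend, he]
  · simp [seqAppend, hm]

theorem seqAppend_add (m k : ℕ) (u w : ℕ → n) : seqAppend m u w (m + k) = w k := by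
  simp [seqAppend]

theorem IsPathSeq.append (hu : IsPathSeq B m u) (hw : IsPathSeq B k w) (he : u m = w 0) :
    IsPathSeq B (m + k) (seqAppend m u w) := by
  intro r hr
  simp only [seqAppend]
  split_ifs with h₁ h₂ h₂
  · exact hu r h₁
  · obtain rfl : m = r + 1 := by omega
    simpa [← he] using hu r h₁
  · omega
  · simpa [show r + 1 - m = r - m + 1 by omega] using hw (r - m) (by omega)

theorem IsPathSeq.apply_ne (hB : Acyclic B) (h : IsPathSeq B m u) {a b : ℕ} (hab : a < b)
    (hb : b ≤ m) : u a ≠ u b := fun hu =>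
  hB ⟨b - a, fun r => u (a + r), by omega,
    fun r => by simpa [Nat.add_assoc] using h (a + r) (by have := r.isLt; omega),
    by simpa [show a + (b - a) = b by omega] using hu⟩

theorem IsPathSeq.lt_card [Fintype n] (hB : Acyclic B) (h : IsPathSeq B m u) :
    m < Fintype.card n := by
  by_contra! hm
  obtain ⟨a, b, hne, hab⟩ := Fintype.exists_ne_map_eq_of_card_lt (fun i : Fin (m + 1) => u i)
    (by simpa using Nat.lt_succ_of_le hm)
  rcases Fin.lt_or_lt_of_ne hne with hlt | hlt
  · exact h.apply_ne hB hlt (Nat.le_of_lt_succ b.isLt) hab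
  · exact h.apply_ne hB hlt (Nat.le_of_lt_succ a.isLt) hab.symm

theorem IsPathSeq.length_eq {ℓ : ℕ} (hℓ : MaxPathsOfLength B ℓ) (h : IsPathSeq B m u)
    (hm : 1 ≤ m) (hsrc : ∀ z, B z (u 0) ≤ 0) (hsnk : ∀ z, B (u m) z ≤ 0) : m = ℓ :=
  hℓ m _ hm ⟨h.isPath, fun ⟨z, hz⟩ => (hsrc z).not_gt (by simpa using hz),
    fun ⟨z, hz⟩ => (hsnk z).not_gt (by simpa using hz)⟩

end Paths

section Height

variable {B : n → n → ℤ} {m : ℕ} {u : ℕ → n}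

noncomputable def height (B : n → n → ℤ) (v : n) : ℕ :=
  sSup {m | ∃ u, IsPathSeq B m u ∧ u m = v}

noncomputable def depth (B : n → n → ℤ) (v : n) : ℕ :=
  sSup {m | ∃ u, IsPathSeq B m u ∧ u 0 = v}

def IsGrading (B : n → n → ℤ) (f : n → ℕ) : Prop :=
  ∀ i j, 0 < B i j → f j = f i + 1

variable [Fintype n]

theorem bddAbove_setOf_isPathSeq (hB : Acyclic B) (p : (ℕ → n) → ℕ → Prop) :
    BddAbove {m | ∃ u, IsPathSeq B m u ∧ p u m} :=
  ⟨Fintype.card n, fun _ ⟨_, hu, _⟩ => (hu.lt_card hB).le⟩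

theorem le_height (hB : Acyclic B) (hu : IsPathSeq B m u) {v : n} (hv : u m = v) :
    m ≤ height B v :=
  le_csSup (bddAbove_setOf_isPathSeq hB _) ⟨u, hu, hv⟩

theorem le_depth (hB : Acyclic B) (hu : IsPathSeq B m u) {v : n} (hv : u 0 = v) :
    m ≤ depth B v :=
  le_csSup (bddAbove_setOf_isPathSeq hB _) ⟨u, hu, hv⟩

theorem exists_isPathSeq_height (hB : Acyclic B) (v : n) :
    ∃ u, IsPathSeq B (height B v) u ∧ u (height B v) = v ∧ ∀ z, B z (u 0) ≤ 0 := by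
  obtain ⟨u, hu, hv⟩ : height B v ∈ {m | ∃ u, IsPathSeq B m u ∧ u m = v} :=
    Nat.sSup_mem ⟨0, fun _ => v, isPathSeq_zero _, rfl⟩ (bddAbove_setOf_isPathSeq hB _)
  refine ⟨u, hu, hv, fun z => not_lt.1 fun hz => ?_⟩
  have := le_height hB ((isPathSeq_edgeSeq hz).append hu rfl)
    ((seqAppend_add _ _ _ _).trans hv)
  omega

theorem exists_isPathSeq_depth (hB : Acyclic B) (v : n) :
    ∃ w, IsPathSeq B (depth B v) w ∧ w 0 = v ∧ ∀ z, B (w (depth B v)) z ≤ 0 := by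
  obtain ⟨w, hw, hv⟩ : depth B v ∈ {m | ∃ u, IsPathSeq B m u ∧ u 0 = v} :=
    Nat.sSup_mem ⟨0, fun _ => v, isPathSeq_zero _, rfl⟩ (bddAbove_setOf_isPathSeq hB _)
  refine ⟨w, hw, hv, fun z => not_lt.1 fun hz => ?_⟩
  have := le_depth hB (hw.append (isPathSeq_edgeSeq hz) rfl)
    (by rw [seqAppend_zero (m := depth B v) (u := w) rfl, hv])
  omega

theorem add_depth_eq {ℓ : ℕ} (hB : Acyclic B) (hℓ : MaxPathsOfLength B ℓ)
    (hu : IsPathSeq B m u) (hm : 1 ≤ m) (hsrc : ∀ z, B z (u 0) ≤ 0) :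
    m + depth B (u m) = ℓ := by
  obtain ⟨w, hw, hw₀, hsnk⟩ := exists_isPathSeq_depth hB (u m)
  refine (hu.append hw hw₀.symm).length_eq hℓ (by omega) ?_ ?_
  · rwa [seqAppend_zero hw₀.symm]
  · rwa [seqAppend_add]

theorem isGrading_height {ℓ : ℕ} (hB : Acyclic B) (hℓ : MaxPathsOfLength B ℓ) :
    IsGrading B (height B) := by
  intro i j hij
  obtain ⟨u, hu, hui, hsrc⟩ := exists_isPathSeq_height hB i
  obtain ⟨w, hw, hwj, hwsrc⟩ := exists_isPathSeq_height hB j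
  have hj : 1 ≤ height B j := le_height hB (isPathSeq_edgeSeq hij) rfl
  have h₁ := add_depth_eq hB hℓ (hu.append (isPathSeq_edgeSeq hij) hui) le_add_self
    (by rwa [seqAppend_zero hui])
  have h₂ := add_depth_eq hB hℓ hw hj hwsrc
  rw [seqAppend_add] at h₁
  rw [hwj] at h₂
  simp only [edgeSeq, one_ne_zero, if_false] at h₁
  omega

end Height

section Twist

variable {B : n → n → ℤ}

def twist (B : n → n → ℤ) (s : n → ℕ) : n → n → ℤ :=
  fun i j => (-1) ^ (s i + s j) * B i j

theorem twist_zero (B : n → n → ℤ) : twist B (fun _ => 0) = B := by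
  funext i j
  simp [twist]

theorem twist_twist (B : n → n → ℤ) (s t : n → ℕ) :
    twist (twist B s) t = twist B fun v => s v + t v := by
  funext i j
  simp only [twist]
  ring

theorem skewSymm_twist (hB : SkewSymm B) (s : n → ℕ) : SkewSymm (twist B s) := by
  intro i j
  simp only [twist, hB i j, Nat.add_comm (s i)]
  ring

end Twist

section Mutation

variable [DecidableEq n] {B D : n → n → ℤ}

def MutationReachable (B C : n → n → ℤ) : Prop :=
  ∃ ks : List n, ks.foldl mutate B = C

theorem MutationReachable.refl (B : n → n → ℤ) : MutationReachable B B := ⟨[], rfl⟩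

theorem MutationReachable.trans {C E : n → n → ℤ} (h₁ : MutationReachable B C)
    (h₂ : MutationReachable C E) : MutationReachable B E := by
  obtain ⟨ks₁, rfl⟩ := h₁
  obtain ⟨ks₂, rfl⟩ := h₂
  exact ⟨ks₁ ++ ks₂, List.foldl_append⟩

theorem mutate_eq_twist_of_sink (hD : SkewSymm D) {k : n} (hk : ∀ j, D k j ≤ 0) :
    mutate D k = twist D fun i => if i = k then 1 else 0 := by
  funext i j
  have hik : 0 ≤ D i k := by linarith [hD i k, hk i]
  have hkk : D k k = 0 := by linarith [hD k k]
  by_cases hi : i = k <;> by_cases hj : j = k <;> simp [mutate, twist, hi, hj, hk j, hik, hkk]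

/-- Sinks are pairwise non-adjacent, so mutating one leaves the others sinks. -/
theorem foldl_mutate_of_sinks {L : List n} (hD : SkewSymm D) (hL : L.Nodup)
    (hsink : ∀ v ∈ L, ∀ j, D v j ≤ 0) :
    L.foldl mutate D = twist D fun i => if i ∈ L then 1 else 0 := by
  induction L generalizing D with
  | nil => simp [twist_zero]
  | cons v L ih =>
    have hvL : v ∉ L := (List.nodup_cons.1 hL).1
    rw [List.foldl_cons, mutate_eq_twist_of_sink hD (hsink v List.mem_cons_self),
      ih (skewSymm_twist hD _) hL.of_cons, twist_twist]
    · congr 1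
      funext i
      by_cases hi : i = v
      · simp [hi, hvL]
      · simp [hi]
    · intro w hw j
      have hwv : w ≠ v := fun h => hvL (h ▸ hw)
      by_cases hj : j = v
      · subst hj
        have := hD w j
        have := hsink j List.mem_cons_self w
        have := hsink w (List.mem_cons_of_mem _ hw) j
        simp [twist, hwv]
        omega
      · simpa [twist, hwv, hj] using hsink w (List.mem_cons_of_mem _ hw) j

theorem MutationReachable.twist_of_sinks (hD : SkewSymm D) (S : Finset n)
    (hS : ∀ v ∈ S, ∀ j, D v j ≤ 0) :
    MutationReachable D (twist D fun i => if i ∈ S then 1 else 0) :=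
  ⟨S.toList, by simpa using foldl_mutate_of_sinks hD S.nodup_toList (by simpa using hS)⟩

end Mutation

section Graded

variable {B : n → n → ℤ} {f : n → ℕ}

theorem twist_nonpos_of_parity (hB : SkewSymm B) (hf : IsGrading B f) {h : ℕ → ℕ} {k : ℕ}
    {v : n} (hv : f v = k + 1) (hup : Odd (h (k + 1) + h (k + 2)))
    (hdown : Even (h k + h (k + 1))) (j : n) : twist B (fun w => h (f w)) v j ≤ 0 := by
  rcases lt_trichotomy (B v j) 0 with hvj | hvj | hvj
  · have hj : f j = k := by have := hf j v (by linarith [hB v j]); omega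
    simp only [twist, hv, hj, Nat.add_comm (h (k + 1)), hdown.neg_one_pow]
    omega
  · simp [twist, hvj]
  · have hj : f j = k + 2 := by rw [hf v j hvj, hv]
    simp only [twist, hv, hj, hup.neg_one_pow]
    omega

theorem twist_half_apply (hB : SkewSymm B) (hf : IsGrading B f) (i j : n) :
    twist B (fun v => f v / 2) i j = (-1) ^ f i * |B i j| := by
  rcases lt_trichotomy (B i j) 0 with hij | hij | hij
  · have hi : f i = f j + 1 := hf j i (by linarith [hB i j])
    rw [twist, abs_of_neg hij, hi, show (f j + 1) / 2 + f j / 2 = f j by omega, pow_succ]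
    ring
  · simp [twist, hij]
  · rw [twist, abs_of_pos hij, hf i j hij, show f i / 2 + (f i + 1) / 2 = f i by omega]

theorem bipartite_twist_half (hB : SkewSymm B) (hf : IsGrading B f) :
    Bipartite (twist B fun v => f v / 2) := by
  intro k
  simp only [twist_half_apply hB hf]
  rcases Nat.even_or_odd (f k) with h | h
  · exact Or.inl fun j => by simp [h.neg_one_pow]
  · exact Or.inr fun j => by simp [h.neg_one_pow]

variable [DecidableEq n] [Fintype n]

/-- Mutating the levels `K, K - 1, …, a + 1` in turn reverses the arrows between levels `a` and
`a + 1`, provided all arrows above level `a` point upwards. -/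
theorem MutationReachable.twist_sweep (hB : SkewSymm B) (hf : IsGrading B f) {K : ℕ}
    (hK : ∀ v, f v ≤ K) (g : ℕ → ℕ) (a : ℕ) (hg : ∀ m, a ≤ m → Even (g m + g (m + 1))) :
    MutationReachable (twist B fun v => g (f v))
      (twist B fun v => g (f v) + if a < f v then 1 else 0) := by
  refine Nat.decreasingInduction' (P := fun k => MutationReachable (twist B fun v => g (f v))
      (twist B fun v => g (f v) + if k < f v then 1 else 0)) ?_ (le_max_left a K) ?_
  · intro k _ hak hreach
    refine hreach.trans ?_
    have hsink : ∀ v ∈ Finset.univ.filter (fun v => f v = k + 1), ∀ j,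
        twist B (fun w => g (f w) + if k + 1 < f w then 1 else 0) v j ≤ 0 := by
      intro v hv
      refine twist_nonpos_of_parity (h := fun m => g m + if k + 1 < m then 1 else 0) hB hf
        (Finset.mem_filter.1 hv).2 ?_ ?_
      · have : Even (g (k + 1) + g (k + 2)) := hg (k + 1) (by omega)
        rw [Nat.even_iff] at this
        rw [Nat.odd_iff]
        simp only [if_neg (lt_irrefl _), if_pos (Nat.lt_succ_self _)]
        omega
      · simpa using hg k hak
    convert MutationReachable.twist_of_sinks (skewSymm_twist hB _) _ hsink using 1
    rw [twist_twist]
    congr 1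
    funext v
    simp only [Finset.mem_filter, Finset.mem_univ, true_and]
    split_ifs <;> omega
  · convert MutationReachable.refl (twist B fun v => g (f v)) using 3 with v
    have := hK v
    simp only [add_eq_left, ite_eq_right_iff]
    omega

theorem MutationReachable.twist_min_half (hB : SkewSymm B) (hf : IsGrading B f) {K : ℕ}
    (hK : ∀ v, f v ≤ K) (T : ℕ) :
    MutationReachable B (twist B fun v => min T (f v / 2)) := by
  induction T with
  | zero => simpa [twist_zero] using MutationReachable.refl B
  | succ T ih =>
    refine ih.trans ?_
    convert MutationReachable.twist_sweep hB hf hK (fun m => min T (m / 2)) (2 * T + 1)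
      (fun m hm => Nat.even_iff.2 (by omega)) using 3 with v
    split_ifs <;> omega

theorem MutationReachable.twist_half (hB : SkewSymm B) (hf : IsGrading B f) :
    MutationReachable B (twist B fun v => f v / 2) := by
  have hK : ∀ v, f v ≤ Finset.univ.sup f := fun v => Finset.le_sup (Finset.mem_univ v)
  convert MutationReachable.twist_min_half hB hf hK (Finset.univ.sup f) using 3 with v
  exact (min_eq_right ((Nat.div_le_self _ _).trans (hK v))).symm

end Graded

end ExchangeMatrix

theorem stmt_11_general {n : Type*} [Fintype n] [DecidableEq n] (B : n → n → ℤ) (ℓ : ℕ)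
    (hskew : SkewSymm B) (hacyc : Acyclic B)
    (hmax : ∀ (m : ℕ) (v : Fin (m + 1) → n), 1 ≤ m → IsMaxPath B m v → m = ℓ) :
    ∃ C : n → n → ℤ, SkewSymm C ∧ Bipartite C ∧
      ∃ ks : List n, List.foldl mutate B ks = C := by
  open ExchangeMatrix in
  have hgrad : IsGrading B (height B) := isGrading_height hacyc hmax
  exact ⟨_, skewSymm_twist hskew _, bipartite_twist_half hskew hgrad,
    MutationReachable.twist_half hskew hgrad⟩

/-- An acyclic quiver all of whose maximal oriented paths have the same length
is mutation equivalent to a bipartite quiver. -/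
theorem stmt_11 {n : Type*} [Fintype n] [DecidableEq n] (B : n → n → ℤ) (ℓ : ℕ)
    (hskew : SkewSymm B) (hacyc : Acyclic B) (hℓ : 1 ≤ ℓ)
    (hmax : ∀ (m : ℕ) (v : Fin (m + 1) → n), 1 ≤ m → IsMaxPath B m v → m = ℓ) :
    ∃ C : n → n → ℤ, SkewSymm C ∧ Bipartite C ∧
      ∃ ks : List n, List.foldl mutate B ks = C :=
  stmt_11_general B ℓ hskew hacyc hmax
end
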